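/- For the signed measure \sigma^{(1)} with density f(x) = (1/(2\pi)) (x^4 - 4x^2 + 2)/sqrt(4-x^2) on [-2,2], the 2k-th moment \int_{-2}^{2} x^{2k} f(x) dx equals \sum_{p_1+p_2+p_3+p_4=k-2} (2p_1+1) Cat(p_1) Cat(p_2) Cat(p_3) Cat(p_4), and all odd moments vanish. -/

import Mathlib

/-!
Substituting `x = 2 sin θ` turns `dx / √(4 - x²)` into `dθ` on `(-π/2, π/2)`, so by Wallis'
formula `∫ x^(2n) / √(4 - x²) = π B n` with `B n = (2n choose n)`. The density of `σ⁽¹⁾` is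
`(x⁴ - 4x² + 2) / (2π √(4 - x²))`, hence its `2k`-th moment is `(B (k+2) - 4 B (k+1) + 2 B k) / 2`,
and it is even, so the odd moments vanish.

On the combinatorial side, `2 (2p + 1) Cat p = B (p + 1)` and `2 ∑_{i+j=n} B i Cat j = B (n + 1)`
(the generating function identity `b c = (b - 1) / 2x`). Splitting off the first index, the
four-fold Catalan convolution weighted by `2p₁ + 1` becomes a convolution of `B` with the three-fold
Catalan convolution `Cat (s + 2) - Cat (s + 1)`, which these identities evaluate to the same
combination of central binomial coefficients.
-/

open Real Set MeasureTheory Nat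

section Catalan

open Finset Finset.Nat

theorem Finset.Nat.sum_antidiagonalTuple_succ {M : Type*} [AddCommMonoid M] (k n : ℕ)
    (f : (Fin (k + 1) → ℕ) → M) :
    ∑ t ∈ antidiagonalTuple (k + 1) n, f t =
      ∑ p ∈ antidiagonal n, ∑ t ∈ antidiagonalTuple k p.2, f (Fin.cons p.1 t) := by
  rw [sum_sigma']
  refine sum_nbij' (fun t => ⟨(t 0, ∑ i, Fin.tail t i), Fin.tail t⟩) (fun x => Fin.cons x.1.1 x.2)
    ?_ ?_ (by simp) ?_ (by simp) <;>
  simp_all [mem_antidiagonalTuple, Fin.sum_univ_succ, Fin.tail]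

theorem Finset.Nat.sum_antidiagonalTuple_succ_prod {R : Type*} [CommSemiring R] (g : ℕ → R)
    (k n : ℕ) :
    ∑ t ∈ antidiagonalTuple (k + 1) n, ∏ i, g (t i) =
      ∑ p ∈ antidiagonal n, g p.1 * ∑ t ∈ antidiagonalTuple k p.2, ∏ i, g (t i) := by
  simp only [sum_antidiagonalTuple_succ, Fin.prod_univ_succ, Fin.cons_zero, Fin.cons_succ, mul_sum]

theorem two_mul_two_mul_add_one_mul_catalan (n : ℕ) :
    2 * (2 * n + 1) * catalan n = centralBinom (n + 1) := by
  refine Nat.eq_of_mul_eq_mul_left n.add_one_pos ?_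
  rw [succ_mul_centralBinom_succ, ← succ_mul_catalan_eq_centralBinom]
  ring

theorem centralBinom_succ_add_two_mul_catalan (n : ℕ) :
    centralBinom (n + 1) + 2 * catalan n = 4 * centralBinom n := by
  rw [← two_mul_two_mul_add_one_mul_catalan, ← succ_mul_catalan_eq_centralBinom]
  ring

theorem two_mul_sum_antidiagonal_centralBinom_mul_catalan (n : ℕ) :
    2 * ∑ p ∈ antidiagonal n, centralBinom p.1 * catalan p.2 = centralBinom (n + 1) := by
  induction n with
  | zero => simp [centralBinom, Nat.choose]
  | succ n ih =>
    have hShifted : ∑ p ∈ antidiagonal n, centralBinom (p.1 + 1) * catalan p.2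
        + 2 * catalan (n + 1) = 2 * centralBinom (n + 1) := by
      rw [← ih, catalan_succ', mul_sum, mul_sum, mul_sum, ← sum_add_distrib]
      refine sum_congr rfl fun p _ => ?_
      linear_combination catalan p.2 * centralBinom_succ_add_two_mul_catalan p.1
    rw [sum_antidiagonal_succ, centralBinom_zero, one_mul]
    linarith [centralBinom_succ_add_two_mul_catalan (n + 1)]

theorem sum_antidiagonalTuple_two_prod_catalan (n : ℕ) :
    ∑ t ∈ antidiagonalTuple 2 n, ∏ i, catalan (t i) = catalan (n + 1) := by
  rw [sum_antidiagonalTuple_succ_prod, catalan_succ']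
  simp [antidiagonalTuple_one]

theorem sum_antidiagonalTuple_three_prod_catalan_add (n : ℕ) :
    ∑ t ∈ antidiagonalTuple 3 n, ∏ i, catalan (t i) + catalan (n + 1) = catalan (n + 2) := by
  rw [sum_antidiagonalTuple_succ_prod, catalan_succ' (n + 1), sum_antidiagonal_succ']
  simp only [sum_antidiagonalTuple_two_prod_catalan, catalan_zero, mul_one, add_comm]

theorem two_mul_sum_antidiagonalTuple_four_catalan_add (m : ℕ) :
    2 * ∑ t ∈ antidiagonalTuple 4 m, (2 * t 0 + 1) * ∏ i, catalan (t i) + 4 * centralBinom (m + 3)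
      = centralBinom (m + 4) + 2 * centralBinom (m + 2) := by
  have hFirstIndex : 2 * ∑ t ∈ antidiagonalTuple 4 m, (2 * t 0 + 1) * ∏ i, catalan (t i) =
      ∑ p ∈ antidiagonal m, centralBinom (p.1 + 1) *
        ∑ t ∈ antidiagonalTuple 3 p.2, ∏ i, catalan (t i) := by
    rw [sum_antidiagonalTuple_succ, mul_sum]
    refine sum_congr rfl fun p _ => ?_
    rw [mul_sum, mul_sum]
    refine sum_congr rfl fun t _ => ?_
    rw [Fin.prod_univ_succ, Fin.cons_zero, ← two_mul_two_mul_add_one_mul_catalan]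
    simp only [Fin.cons_succ]
    ring
  -- Peeling the boundary terms off the `B * Cat` convolution at `m + 2` and `m + 3` evaluates
  -- `∑ B (p + 1) Cat (s + 1)` and `∑ B (p + 1) Cat (s + 2)` over `p + s = m`.
  have hShiftOne := two_mul_sum_antidiagonal_centralBinom_mul_catalan (m + 2)
  have hShiftTwo := two_mul_sum_antidiagonal_centralBinom_mul_catalan (m + 3)
  rw [sum_antidiagonal_succ, sum_antidiagonal_succ'] at hShiftOne
  rw [sum_antidiagonal_succ, sum_antidiagonal_succ', sum_antidiagonal_succ'] at hShiftTwo
  simp only [centralBinom_zero, catalan_zero, catalan_one, zero_add, one_mul, mul_one, add_assoc,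
    Nat.reduceAdd] at hShiftOne hShiftTwo
  have hThreeFold : ∀ p ∈ antidiagonal m, centralBinom (p.1 + 1) *
      ∑ t ∈ antidiagonalTuple 3 p.2, ∏ i, catalan (t i) + centralBinom (p.1 + 1) * catalan (p.2 + 1)
      = centralBinom (p.1 + 1) * catalan (p.2 + 2) := fun p _ => by
    rw [← mul_add, sum_antidiagonalTuple_three_prod_catalan_add]
  have hSplit := sum_congr rfl hThreeFold
  rw [sum_add_distrib] at hSplit
  linarith [centralBinom_succ_add_two_mul_catalan (m + 2),
    centralBinom_succ_add_two_mul_catalan (m + 3)]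

end Catalan

theorem integral_div_sqrt_four_sub_sq (g : ℝ → ℝ) :
    ∫ x in (-2 : ℝ)..2, g x / √(4 - x ^ 2) = ∫ θ in (-(π / 2))..(π / 2), g (2 * sin θ) := by
  have hImage : (fun θ => 2 * sin θ) '' Ioo (-(π / 2)) (π / 2) = Ioo (-2) 2 := by
    have hSin : sin '' Ioo (-(π / 2)) (π / 2) = Ioo (-1) 1 :=
      sinPartialHomeomorph.image_source_eq_target
    rw [← image_image (2 * ·) sin, hSin, image_mul_left_Ioo two_pos]
    norm_num
  have hInj : InjOn (fun θ => 2 * sin θ) (Ioo (-(π / 2)) (π / 2)) :=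
    ((mul_right_injective₀ two_ne_zero).injOn).comp sinPartialHomeomorph.injOn
      sinPartialHomeomorph.map_source'
  have hDeriv : ∀ θ ∈ Ioo (-(π / 2)) (π / 2),
      HasDerivWithinAt (fun θ => 2 * sin θ) (2 * cos θ) (Ioo (-(π / 2)) (π / 2)) θ :=
    fun θ _ => ((hasDerivAt_sin θ).const_mul 2).hasDerivWithinAt
  rw [intervalIntegral.integral_of_le (by norm_num), integral_Ioc_eq_integral_Ioo, ← hImage,
    integral_image_eq_integral_abs_deriv_smul measurableSet_Ioo hDeriv hInj,
    intervalIntegral.integral_of_le (by linarith [pi_pos]), integral_Ioc_eq_integral_Ioo]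
  refine setIntegral_congr_fun measurableSet_Ioo fun θ hθ => ?_
  have hcos : 0 < cos θ := cos_pos_of_mem_Ioo hθ
  have hsqrt : √(4 - (2 * sin θ) ^ 2) = 2 * cos θ := by
    rw [← sqrt_sq (by positivity : 0 ≤ 2 * cos θ)]
    congr 1
    linear_combination (-4) * sin_sq_add_cos_sq θ
  simp only [smul_eq_mul, hsqrt, abs_of_pos (by positivity : 0 < 2 * cos θ)]
  field_simp

theorem four_pow_mul_prod_eq_centralBinom (n : ℕ) :
    (4 : ℝ) ^ n * ∏ i ∈ Finset.range n, (2 * (i : ℝ) + 1) / (2 * i + 2) = centralBinom n := by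
  induction n with
  | zero => simp
  | succ n ih =>
    have h := congrArg (Nat.cast : ℕ → ℝ) (succ_mul_centralBinom_succ n)
    push_cast at h
    rw [Finset.prod_range_succ, pow_succ, mul_mul_mul_comm, ih]
    field_simp
    linear_combination -2 * h

theorem integral_two_mul_sin_pow_even (n : ℕ) :
    ∫ θ in (-(π / 2))..(π / 2), (2 * sin θ) ^ (2 * n) = π * centralBinom n := by
  have hPeriodic : Function.Periodic (fun θ => (2 * sin θ) ^ (2 * n)) π := fun θ => by
    simp only [sin_add_pi, mul_neg, (even_two_mul n).neg_pow]
  calc ∫ θ in (-(π / 2))..(π / 2), (2 * sin θ) ^ (2 * n)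
      = ∫ θ in (0 : ℝ)..0 + π, (2 * sin θ) ^ (2 * n) := by
        rw [← hPeriodic.intervalIntegral_add_eq (-(π / 2)) 0]
        ring_nf
    _ = 4 ^ n * ∫ θ in (0 : ℝ)..π, sin θ ^ (2 * n) := by
        simp only [zero_add, mul_pow, pow_mul, intervalIntegral.integral_const_mul]
        norm_num
    _ = π * centralBinom n := by
        rw [integral_sin_pow_even, ← four_pow_mul_prod_eq_centralBinom]
        ring

theorem Function.Odd.intervalIntegral_eq_zero {E : Type*} [NormedAddCommGroup E] [NormedSpace ℝ E]
    {f : ℝ → E} (hf : f.Odd) (a : ℝ) : ∫ x in -a..a, f x = 0 := by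
  have h := intervalIntegral.integral_comp_neg (a := -a) (b := a) f
  simp only [hf.eq, intervalIntegral.integral_neg, neg_neg] at h
  have h2 : (2 : ℝ) • ∫ x in -a..a, f x = 0 := by
    rw [two_smul]
    nth_rewrite 1 [← h]
    exact neg_add_cancel _
  exact (smul_eq_zero.mp h2).resolve_left two_ne_zero

noncomputable def sigmaOneDensity (x : ℝ) : ℝ :=
  1 / (2 * π) * (x ^ 4 - 4 * x ^ 2 + 2) / √(4 - x ^ 2)

theorem integral_pow_mul_sigmaOneDensity_even (k : ℕ) :
    ∫ x in (-2 : ℝ)..2, x ^ (2 * k) * sigmaOneDensity x =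
      (centralBinom (k + 2) - 4 * centralBinom (k + 1) + 2 * centralBinom k : ℝ) / 2 := by
  have hIntegrand (x : ℝ) : x ^ (2 * k) * sigmaOneDensity x =
      1 / (2 * π) * (x ^ (2 * (k + 2)) - 4 * x ^ (2 * (k + 1)) + 2 * x ^ (2 * k)) /
        √(4 - x ^ 2) := by
    unfold sigmaOneDensity
    ring
  have hInt (j : ℕ) :
      IntervalIntegrable (fun θ => (2 * sin θ) ^ (2 * j)) volume (-(π / 2)) (π / 2) :=
    (by fun_prop : Continuous _).intervalIntegrable _ _
  simp_rw [hIntegrand]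
  rw [integral_div_sqrt_four_sub_sq, intervalIntegral.integral_const_mul,
    intervalIntegral.integral_add ((hInt _).sub ((hInt _).const_mul 4)) ((hInt _).const_mul 2),
    intervalIntegral.integral_sub (hInt _) ((hInt _).const_mul 4),
    intervalIntegral.integral_const_mul, intervalIntegral.integral_const_mul,
    integral_two_mul_sin_pow_even, integral_two_mul_sin_pow_even, integral_two_mul_sin_pow_even]
  field_simp

theorem sigmaOneDensity_even : Function.Even sigmaOneDensity := fun x => by
  simp only [sigmaOneDensity, even_two.neg_pow, (by decide : Even 4).neg_pow]

theorem integral_pow_mul_sigmaOneDensity_odd (k : ℕ) :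
    ∫ x in (-2 : ℝ)..2, x ^ (2 * k + 1) * sigmaOneDensity x = 0 :=
  Function.Odd.intervalIntegral_eq_zero
    (Function.Odd.mul_even (fun x => (odd_two_mul_add_one k).neg_pow x) sigmaOneDensity_even) 2

/-- For the signed measure with density `f(x) = (1/2π)(x⁴-4x²+2)/√(4-x²)` on `[-2,2]`,
the `2k`-th moment equals `∑_{p₁+p₂+p₃+p₄=k-2} (2p₁+1)Cat(p₁)Cat(p₂)Cat(p₃)Cat(p₄)`
(the empty sum `0` for `k < 2`), and all odd moments vanish. -/
theorem sigmaOne_moments :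
    (∀ k : ℕ,
      ∫ x in (-2 : ℝ)..2,
          x ^ (2 * k) * (1 / (2 * π) * (x ^ 4 - 4 * x ^ 2 + 2) / Real.sqrt (4 - x ^ 2))
        = if k < 2 then 0
          else ∑ t ∈ Finset.Nat.antidiagonalTuple 4 (k - 2),
            (2 * (t 0) + 1 : ℕ) * ∏ i, (catalan (t i) : ℝ)) ∧
    (∀ k : ℕ,
      ∫ x in (-2 : ℝ)..2,
          x ^ (2 * k + 1) * (1 / (2 * π) * (x ^ 4 - 4 * x ^ 2 + 2) / Real.sqrt (4 - x ^ 2))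
        = 0) := by
  refine ⟨fun k => (integral_pow_mul_sigmaOneDensity_even k).trans ?_,
    integral_pow_mul_sigmaOneDensity_odd⟩
  split_ifs with hk
  · interval_cases k <;> norm_num [centralBinom, Nat.choose]
  · obtain ⟨m, rfl⟩ := Nat.exists_eq_add_of_le' (not_lt.mp hk)
    have h := congrArg (Nat.cast : ℕ → ℝ) (two_mul_sum_antidiagonalTuple_four_catalan_add m)
    push_cast at h ⊢
    simp only [add_assoc, Nat.reduceAdd]
    linarith
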